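/- For every r ≥ 0, (1/√(2π)) · ∫₀^{2π} r |sin θ| · erfc(√2 · r |sin θ|) · e^{2 r² sin² θ} dθ = 1 - e^{2 r²} erfc(√2 · r). (This identifies the radial density of the complex eigenvalues of the real Ginibre ensemble obtained after performing the angular integral.) -/

import Mathlib

/-!
Write `erfcx x = e^{x²} erfc x`. The integrand depends on `θ` only through `|sin θ|`, so the
integral over `[0, 2π]` is four times the one over `[0, π/2]`, and with `x = √2 r` the claim
becomes `∫₀^{π/2} x sin θ erfcx (x sin θ) dθ = (√π / 2) (1 - erfcx x)`.
Since `erfcx' x = 2 x erfcx x - 2/√π`, both sides vanish at `x = 0` and solve the linear ODE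
`y' = 2 x y + 1 - √π x`: for the integral, differentiate under the integral sign and split
`sin² θ = 1 - cos² θ`; the `cos²` part together with the first term is the `θ`-derivative of
`-cos θ erfcx (x sin θ)`. Uniqueness for linear ODEs (integrating factor `e^{-x²}`) concludes.
-/

open MeasureTheory Real Filter

/-- The error function `erf(x) = (2/√π) ∫₀^x e^(-t²) dt`. -/
noncomputable def erf (x : ℝ) : ℝ := (2 / Real.sqrt π) * ∫ t in (0:ℝ)..x, Real.exp (-t ^ 2)

/-- The complementary error function `erfc(x) = 1 - erf(x)`. -/
noncomputable def erfc (x : ℝ) : ℝ := 1 - erf x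

section General

variable {E : Type*} [NormedAddCommGroup E] [NormedSpace ℝ E]

theorem hasDerivAt_intervalIntegral_of_continuous_deriv {F F' : ℝ → ℝ → E} {a b x₀ : ℝ}
    (hF : ∀ x, Continuous (F x)) (hF' : Continuous (Function.uncurry F'))
    (hderiv : ∀ x θ, HasDerivAt (F · θ) (F' x θ) x) :
    HasDerivAt (fun x => ∫ θ in a..b, F x θ) (∫ θ in a..b, F' x₀ θ) x₀ := by
  obtain ⟨C, hC⟩ := ((isCompact_closedBall x₀ 1).prod isCompact_uIcc).exists_bound_of_continuousOn
    hF'.continuousOn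
  exact (intervalIntegral.hasDerivAt_integral_of_dominated_loc_of_deriv_le (bound := fun _ => C)
    (Metric.closedBall_mem_nhds x₀ one_pos)
    (Eventually.of_forall fun x => (hF x).aestronglyMeasurable)
    ((hF x₀).intervalIntegrable a b)
    (hF'.uncurry_left x₀).aestronglyMeasurable
    (ae_of_all _ fun θ hθ x hx => hC (x, θ) ⟨hx, Set.uIoc_subset_uIcc hθ⟩)
    intervalIntegrable_const
    (ae_of_all _ fun θ _ x _ => hderiv x θ)).2

theorem integral_comp_abs_sin_zero_two_pi {φ : ℝ → E} (hφ : Continuous φ) :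
    ∫ θ in (0:ℝ)..2 * π, φ |sin θ| = (4:ℝ) • ∫ θ in (0:ℝ)..π / 2, φ (sin θ) := by
  have hc : Continuous fun θ => φ |sin θ| := hφ.comp (continuous_abs.comp continuous_sin)
  have hint : ∀ a b, IntervalIntegrable (fun θ => φ |sin θ|) volume a b :=
    fun a b => hc.intervalIntegrable a b
  have hper : Function.Periodic (fun θ => φ |sin θ|) π := fun θ => by simp [sin_add_pi]
  have hrefl : ∫ θ in π / 2..π, φ |sin θ| = ∫ θ in (0:ℝ)..π / 2, φ |sin θ| := by
    have := intervalIntegral.integral_comp_sub_left (a := 0) (b := π / 2) (fun θ => φ |sin θ|) π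
    rw [sub_zero, show π - π / 2 = π / 2 by ring] at this
    simpa only [sin_pi_sub] using this.symm
  have hsin : ∫ θ in (0:ℝ)..π / 2, φ |sin θ| = ∫ θ in (0:ℝ)..π / 2, φ (sin θ) := by
    refine intervalIntegral.integral_congr fun θ hθ => ?_
    rw [Set.uIcc_of_le (by positivity)] at hθ
    simp only [abs_of_nonneg (sin_nonneg_of_nonneg_of_le_pi hθ.1 (by linarith [hθ.2, pi_pos]))]
  calc ∫ θ in (0:ℝ)..2 * π, φ |sin θ|
      = (∫ θ in (0:ℝ)..π, φ |sin θ|) + ∫ θ in (0:ℝ)..0 + π, φ |sin θ| := by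
        rw [← hper.intervalIntegral_add_eq_add 0 π hint, two_mul]
    _ = (4:ℝ) • ∫ θ in (0:ℝ)..π / 2, φ (sin θ) := by
        rw [zero_add, ← intervalIntegral.integral_add_adjacent_intervals (hint 0 (π / 2))
          (hint (π / 2) π), hrefl, hsin]
        module

end General

theorem linearODE_solution_unique {y z P p q : ℝ → ℝ} (hP : ∀ x, HasDerivAt P (p x) x)
    (hy : ∀ x, HasDerivAt y (p x * y x + q x) x) (hz : ∀ x, HasDerivAt z (p x * z x + q x) x)
    {x₀ : ℝ} (h₀ : y x₀ = z x₀) (x : ℝ) : y x = z x := by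
  have hD : ∀ x, HasDerivAt (fun x => (y x - z x) * exp (-P x)) 0 x := fun x => by
    refine (((hy x).sub (hz x)).mul (hP x).neg.exp).congr_deriv ?_
    simp only [Pi.sub_apply]
    ring
  have := is_const_of_deriv_eq_zero (fun x => (hD x).differentiableAt) (fun x => (hD x).deriv) x x₀
  simpa [h₀, sub_eq_zero, exp_ne_zero] using this

theorem hasDerivAt_erf (x : ℝ) : HasDerivAt erf (2 / √π * exp (-x ^ 2)) x := by
  have hc : Continuous fun t : ℝ => exp (-t ^ 2) := by fun_prop
  exact (intervalIntegral.integral_hasDerivAt_right (hc.intervalIntegrable 0 x)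
    (hc.stronglyMeasurableAtFilter _ _) hc.continuousAt).const_mul _

theorem continuous_erf : Continuous erf :=
  continuous_iff_continuousAt.2 fun x => (hasDerivAt_erf x).continuousAt

noncomputable def erfcx (x : ℝ) : ℝ := exp (x ^ 2) * erfc x

theorem erfcx_zero : erfcx 0 = 1 := by simp [erfcx, erfc, erf]

theorem hasDerivAt_erfcx (x : ℝ) : HasDerivAt erfcx (2 * x * erfcx x - 2 / √π) x := by
  have h := ((hasDerivAt_pow 2 x).exp).mul ((hasDerivAt_erf x).const_sub 1)
  refine h.congr_deriv ?_
  have : exp (x ^ 2) * exp (-x ^ 2) = 1 := by rw [← exp_add]; simp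
  simp only [erfcx, erfc]
  linear_combination (-(2 / √π)) * this

@[fun_prop]
theorem continuous_erfcx : Continuous erfcx :=
  continuous_iff_continuousAt.2 fun x => (hasDerivAt_erfcx x).continuousAt

theorem integral_sin_mul_erfcx_sub_cos_sq_mul_deriv (x : ℝ) :
    ∫ θ in (0:ℝ)..π / 2, (sin θ * erfcx (x * sin θ)
      - x * cos θ ^ 2 * (2 * (x * sin θ) * erfcx (x * sin θ) - 2 / √π)) = 1 := by
  have hderiv : ∀ θ, HasDerivAt (fun θ => -cos θ * erfcx (x * sin θ)) (sin θ * erfcx (x * sin θ)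
      - x * cos θ ^ 2 * (2 * (x * sin θ) * erfcx (x * sin θ) - 2 / √π)) θ := fun θ => by
    refine ((hasDerivAt_cos θ).neg.mul
      ((hasDerivAt_erfcx _).comp θ ((hasDerivAt_sin θ).const_mul x))).congr_deriv ?_
    simp only [Function.comp_apply, Pi.neg_apply]
    ring
  rw [intervalIntegral.integral_eq_sub_of_hasDerivAt (fun θ _ => hderiv θ)
    (Continuous.intervalIntegrable (by fun_prop) _ _)]
  simp [erfcx_zero]

theorem hasDerivAt_integral_mul_sin_mul_erfcx (x : ℝ) :
    HasDerivAt (fun x => ∫ θ in (0:ℝ)..π / 2, x * sin θ * erfcx (x * sin θ))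
      (1 + 2 * x * (∫ θ in (0:ℝ)..π / 2, x * sin θ * erfcx (x * sin θ)) - √π * x) x := by
  have h := hasDerivAt_intervalIntegral_of_continuous_deriv (a := 0) (b := π / 2) (x₀ := x)
    (F := fun x θ => x * sin θ * erfcx (x * sin θ))
    (F' := fun x θ => sin θ * erfcx (x * sin θ)
      + x * sin θ ^ 2 * (2 * (x * sin θ) * erfcx (x * sin θ) - 2 / √π))
    (fun x => by fun_prop) (by fun_prop) fun x θ => by
      refine ((hasDerivAt_mul_const (sin θ)).mul
        ((hasDerivAt_erfcx _).comp x (hasDerivAt_mul_const (sin θ)))).congr_deriv ?_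
      simp only [Function.comp_apply]
      ring
  refine h.congr_deriv ?_
  have hsplit : ∀ θ, sin θ * erfcx (x * sin θ)
        + x * sin θ ^ 2 * (2 * (x * sin θ) * erfcx (x * sin θ) - 2 / √π)
      = (sin θ * erfcx (x * sin θ)
          - x * cos θ ^ 2 * (2 * (x * sin θ) * erfcx (x * sin θ) - 2 / √π))
        + (2 * x * (x * sin θ * erfcx (x * sin θ)) - 2 / √π * x) := fun θ => by
    linear_combination (x * (2 * (x * sin θ) * erfcx (x * sin θ) - 2 / √π)) * sin_sq_add_cos_sq θ
  have hπ : 2 / √π * x * (π / 2) = √π * x := by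
    field_simp
    rw [sq_sqrt pi_pos.le]
    ring
  simp only [hsplit]
  rw [intervalIntegral.integral_add (Continuous.intervalIntegrable (by fun_prop) _ _)
      (Continuous.intervalIntegrable (by fun_prop) _ _),
    intervalIntegral.integral_sub (Continuous.intervalIntegrable (by fun_prop) _ _)
      intervalIntegrable_const,
    intervalIntegral.integral_const_mul, intervalIntegral.integral_const,
    integral_sin_mul_erfcx_sub_cos_sq_mul_deriv, smul_eq_mul, sub_zero, mul_comm (π / 2), hπ]
  ring

theorem integral_mul_sin_mul_erfcx (x : ℝ) :
    ∫ θ in (0:ℝ)..π / 2, x * sin θ * erfcx (x * sin θ) = √π / 2 * (1 - erfcx x) := by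
  have hK : ∀ x, HasDerivAt (fun x => √π / 2 * (1 - erfcx x))
      (2 * x * (√π / 2 * (1 - erfcx x)) + (1 - √π * x)) x := fun x => by
    refine ((hasDerivAt_erfcx x).const_sub 1 |>.const_mul (√π / 2)).congr_deriv ?_
    have : √π * (√π)⁻¹ = 1 := mul_inv_cancel₀ (sqrt_pos.2 pi_pos).ne'
    linear_combination this
  exact linearODE_solution_unique (P := fun x => x ^ 2) (fun x => by simpa using hasDerivAt_pow 2 x)
    (fun x => (hasDerivAt_integral_mul_sin_mul_erfcx x).congr_deriv (by ring)) hK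
    (x₀ := 0) (by simp [erfcx_zero]) x

theorem radial_density_complex_eigenvalues_GinOE (r : ℝ) :
    (1 / Real.sqrt (2 * π)) * ∫ θ in (0:ℝ)..(2 * π),
        r * |Real.sin θ| * erfc (Real.sqrt 2 * (r * |Real.sin θ|))
          * Real.exp (2 * r ^ 2 * Real.sin θ ^ 2)
      = 1 - Real.exp (2 * r ^ 2) * erfc (Real.sqrt 2 * r) := by
  have hsqrt2 : √2 ^ 2 = 2 := sq_sqrt zero_le_two
  have hintegrand : ∀ θ, r * |sin θ| * erfc (√2 * (r * |sin θ|)) * exp (2 * r ^ 2 * sin θ ^ 2)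
      = (√2)⁻¹ * (√2 * r * |sin θ| * erfcx (√2 * r * |sin θ|)) := fun θ => by
    rw [erfcx, ← sq_abs (sin θ), mul_pow, mul_pow, hsqrt2]
    field_simp
  have herfcx : erfcx (√2 * r) = exp (2 * r ^ 2) * erfc (√2 * r) := by
    rw [erfcx, mul_pow, hsqrt2]
  simp only [hintegrand]
  rw [intervalIntegral.integral_const_mul,
    integral_comp_abs_sin_zero_two_pi (φ := fun t => √2 * r * t * erfcx (√2 * r * t)) (by fun_prop),
    smul_eq_mul, integral_mul_sin_mul_erfcx, herfcx, sqrt_mul zero_le_two]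
  field_simp
  rw [hsqrt2]
  ring
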